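/- There exists ε > 0, depending only on 𝒥, ℛ, (ā_r)_{r∈ℛ}, and C, with the following property. Let x : [0,∞) → [0,∞)^E be locally absolutely continuous and suppose that at almost every t ≥ 0 with x(t) ∈ (0,∞)^E, each coordinate x_{jr} is differentiable at t with x_{jr}′(t) = u_{j_−^r r}(t) − u_{jr}(t), where u_{jr}(t) = x_{jr}(t) σ*_j(q(t)) / q_j(t), j_−^r denotes the link preceding j on route r, and when j is the first link of route r the inflow term u_{j_−^r r}(t) is replaced by ā_r. Then at almost every t ≥ 0 with x(t) ∈ (0,∞)^E, the function t ↦ H(x(t)) is differentiable at t and (d/dt) H(x(t)) ≤ −ε. -/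

import Mathlib

open MeasureTheory
open scoped Classical

/-- Per-link queue sizes `q j = ∑_{r ∋ j} x j r`, where route `r` consists of
the links `link r 0, …, link r (K r - 1)`. -/
noncomputable def qOf {J R : Type} [Fintype R] (K : R → ℕ) (link : R → ℕ → J)
    (x : J → R → ℝ) (j : J) : ℝ :=
  ∑ r ∈ Finset.univ.filter (fun r => ∃ k < K r, link r k = j), x j r

/-- The entropy Lyapunov function
`H(x) = ∑_{(j,r)∈E} x j r * log (x j r * σ*ⱼ(q) / (qⱼ * ā_r))`. -/
noncomputable def Hfun {J R : Type} [Fintype J] [Fintype R] (K : R → ℕ)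
    (link : R → ℕ → J) (abar : R → ℝ) (sstar : (J → ℝ) → J → ℝ)
    (x : J → R → ℝ) : ℝ :=
  ∑ j, ∑ r ∈ Finset.univ.filter (fun r => ∃ k < K r, link r k = j),
    x j r * Real.log (x j r * sstar (qOf K link x) j / (qOf K link x j * abar r))

/-!
Write `u r k = x j r * σ*ⱼ(q) / qⱼ` for the rate at which the `k`-th link `j` of route `r` serves
that route, and `u r (-1) = ā_r`. Reindexed by route positions,
`H = ∑ x log x - ∑ q log q + ∑ q log σ*(q) - ∑ x log ā`. The third sum is the optimal value of the
proportional-fairness problem, so by an envelope argument its derivative is `∑ q' log σ*(q)`;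
this needs continuity of `σ*`, which follows from compactness of `C` and strict concavity of
`log`. Hence `dH/dt = ∑_r ∑_k (u r (k-1) - u r k) log (u r k / ā_r)`.

Along one route this telescopes, with potential `w log (w / ā) - w` minimised at `w = ā`, to at
most `-∑_k (√(u r k) - √(u r (k-1)))²`. Since `(1 + δ) ā` lies in `C` for some `δ > 0`,
optimality of `σ*(q)` gives a link with `σ*ⱼ ≥ (1 + δ) āⱼ`, hence a route position with
`u r k ≥ (1 + δ) ā_r`. Climbing from `√ā_r` to `√(u r k)` takes at most `max K` steps, so one of
the squares is bounded below uniformly in the state.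
-/

open Real Finset Filter Topology Asymptotics

lemma sq_sqrt_sub_sqrt_le {v u : ℝ} (hv : 0 < v) (hu : 0 < u) :
    (√u - √v) ^ 2 ≤ u - v - v * log (u / v) := by
  have hlog : log (u / v) ≤ 2 * (√u / √v - 1) := by
    have h := log_le_sub_one_of_pos (div_pos (sqrt_pos.2 hu) (sqrt_pos.2 hv))
    rwa [log_div (sqrt_pos.2 hu).ne' (sqrt_pos.2 hv).ne', log_sqrt hu.le, log_sqrt hv.le,
      ← sub_div, div_le_iff₀ two_pos, ← log_div hu.ne' hv.ne', mul_comm] at h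
  have hv' : v * (√u / √v - 1) = √u * √v - √v ^ 2 := by
    have h2 := sq_sqrt hv.le
    field_simp
    rw [h2]
  nlinarith [mul_le_mul_of_nonneg_left hlog hv.le, sq_sqrt hu.le, sq_sqrt hv.le]

/-- The inflow into the `k`-th link of a route with arrival rate `a` whose links serve it at
rates `u 0, u 1, …`. -/
def routeInflow (a : ℝ) (u : ℕ → ℝ) (k : ℕ) : ℝ := if k = 0 then a else u (k - 1)

/-- The contribution of a route with `n` links to the derivative of `H`. -/
noncomputable def routeDrift (a : ℝ) (n : ℕ) (u : ℕ → ℝ) : ℝ :=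
  ∑ k ∈ range n, (routeInflow a u k - u k) * log (u k / a)

section Route

variable {a : ℝ} {n : ℕ} {u : ℕ → ℝ}

lemma routeInflow_zero : routeInflow a u 0 = a := rfl

lemma routeInflow_succ (k : ℕ) : routeInflow a u (k + 1) = u k := rfl

lemma routeInflow_pos (ha : 0 < a) (hu : ∀ k < n, 0 < u k) {k : ℕ} (hk : k ≤ n) :
    0 < routeInflow a u k := by
  cases k with
  | zero => exact ha
  | succ k => exact hu k hk

lemma routeDrift_le (ha : 0 < a) (hu : ∀ k < n, 0 < u k) :
    routeDrift a n u ≤ -∑ k ∈ range n, (√(u k) - √(routeInflow a u k)) ^ 2 := by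
  set v := routeInflow a u
  set G : ℝ → ℝ := fun w => w * log (w / a) - w
  have hstep : ∀ k < n, (v k - u k) * log (u k / a)
      = (G (v k) - G (v (k + 1))) - (u k - v k - v k * log (u k / v k)) := by
    intro k hk
    have hv := routeInflow_pos ha hu hk.le
    simp only [G, v, routeInflow_succ]
    rw [log_div (hu k hk).ne' ha.ne', log_div hv.ne' ha.ne', log_div (hu k hk).ne' hv.ne']
    ring
  have hG : G (v 0) - G (v n) ≤ 0 := by
    have h := sq_sqrt_sub_sqrt_le (routeInflow_pos ha hu le_rfl) ha
    simp only [G, v, routeInflow_zero, div_self ha.ne', log_one, mul_zero]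
    rw [← neg_neg (log (routeInflow a u n / a)), ← log_inv, inv_div]
    nlinarith [sq_nonneg (√a - √(routeInflow a u n))]
  have hsum : routeDrift a n u = (G (v 0) - G (v n))
      - ∑ k ∈ range n, (u k - v k - v k * log (u k / v k)) := by
    rw [routeDrift, sum_congr rfl fun k hk => hstep k (mem_range.1 hk), sum_sub_distrib,
      sum_range_sub']
  have hsq : ∑ k ∈ range n, (√(u k) - √(v k)) ^ 2
      ≤ ∑ k ∈ range n, (u k - v k - v k * log (u k / v k)) :=
    sum_le_sum fun k hk =>
      sq_sqrt_sub_sqrt_le (routeInflow_pos ha hu (mem_range.1 hk).le) (hu k (mem_range.1 hk))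
  linarith

lemma routeDrift_nonpos (ha : 0 < a) (hu : ∀ k < n, 0 < u k) : routeDrift a n u ≤ 0 :=
  (routeDrift_le ha hu).trans (neg_nonpos.2 (sum_nonneg fun _ _ => sq_nonneg _))

lemma sqrt_sub_sqrt_le_routeDrift (ha : 0 < a) (hu : ∀ k < n, 0 < u k) {m : ℕ} (hm : m < n) :
    √(u m) - √a ≤ (m + 1) * √(-routeDrift a n u) := by
  set v := routeInflow a u
  have hstep : ∀ k < n, √(v (k + 1)) - √(v k) ≤ √(-routeDrift a n u) := by
    intro k hk
    have hsq : (√(u k) - √(v k)) ^ 2 ≤ -routeDrift a n u := by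
      have := single_le_sum (f := fun k => (√(u k) - √(v k)) ^ 2) (fun _ _ => sq_nonneg _)
        (mem_range.2 hk)
      linarith [routeDrift_le ha hu]
    simp only [v, routeInflow_succ]
    exact (le_abs_self _).trans ((sqrt_sq_eq_abs _).symm.trans_le (sqrt_le_sqrt hsq))
  calc √(u m) - √a = ∑ k ∈ range (m + 1), (√(v (k + 1)) - √(v k)) := by
        rw [sum_range_sub (fun k => √(v k))]
        simp only [v, routeInflow_succ, routeInflow_zero]
    _ ≤ ∑ k ∈ range (m + 1), √(-routeDrift a n u) :=
        sum_le_sum fun k hk => hstep k (by have := mem_range.1 hk; omega)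
    _ = (m + 1) * √(-routeDrift a n u) := by simp

lemma routeDrift_le_neg_sq (ha : 0 < a) (hu : ∀ k < n, 0 < u k) {m : ℕ} (hm : m < n) {b N : ℝ}
    (hab : a ≤ b) (hb : b ≤ u m) (hN : n ≤ N) :
    routeDrift a n u ≤ -((√b - √a) / N) ^ 2 := by
  have hmN : (m : ℝ) + 1 ≤ N := le_trans (by exact_mod_cast hm) hN
  have hN0 : 0 < N := lt_of_lt_of_le (by positivity) hmN
  have hchain : √b - √a ≤ N * √(-routeDrift a n u) :=
    calc √b - √a ≤ √(u m) - √a := by gcongr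
      _ ≤ (m + 1) * √(-routeDrift a n u) := sqrt_sub_sqrt_le_routeDrift ha hu hm
      _ ≤ N * √(-routeDrift a n u) := by gcongr
  have hle : (√b - √a) / N ≤ √(-routeDrift a n u) := by rwa [div_le_iff₀ hN0, mul_comm]
  rw [le_neg, ← Real.le_sqrt (div_nonneg (sub_nonneg.2 (sqrt_le_sqrt hab)) hN0.le)
    (neg_nonneg.2 (routeDrift_nonpos ha hu))]
  exact hle

end Route

section ProportionalFairness

variable {J : Type} [Fintype J] {C : Set (J → ℝ)}

structure IsPropFair (C : Set (J → ℝ)) (q s : J → ℝ) : Prop where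
  mem : s ∈ C
  pos : ∀ j, 0 < s j
  le : ∀ s' ∈ C, (∀ j, 0 < s' j) → ∑ j, q j * log (s' j) ≤ ∑ j, q j * log (s j)

lemma IsPropFair.eq (hC : Convex ℝ C) {q s s' : J → ℝ} (hq : ∀ j, 0 < q j)
    (hs : IsPropFair C q s) (hs' : IsPropFair C q s') : s = s' := by
  by_contra hne
  obtain ⟨i, hi⟩ := Function.ne_iff.1 hne
  set m : J → ℝ := (1 / 2 : ℝ) • s + (1 / 2 : ℝ) • s'
  have hmC : m ∈ C := hC hs.mem hs'.mem (by norm_num) (by norm_num) (by norm_num)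
  have hm : ∀ j, 0 < m j := fun j => by
    simp only [m, Pi.add_apply, Pi.smul_apply, smul_eq_mul]
    linarith [hs.pos j, hs'.pos j]
  have hlt : ∑ j, q j * ((1 / 2 : ℝ) * log (s j) + (1 / 2 : ℝ) * log (s' j))
      < ∑ j, q j * log (m j) :=
    sum_lt_sum
      (fun j _ => mul_le_mul_of_nonneg_left (strictConcaveOn_log_Ioi.concaveOn.2 (hs.pos j)
        (hs'.pos j) (by norm_num) (by norm_num) (by norm_num)) (hq j).le)
      ⟨i, mem_univ i, mul_lt_mul_of_pos_left (strictConcaveOn_log_Ioi.2 (hs.pos i) (hs'.pos i)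
        hi (by norm_num) (by norm_num) (by norm_num)) (hq i)⟩
  have hsplit : ∑ j, q j * ((1 / 2 : ℝ) * log (s j) + (1 / 2 : ℝ) * log (s' j))
      = (1 / 2 : ℝ) * ∑ j, q j * log (s j) + (1 / 2 : ℝ) * ∑ j, q j * log (s' j) := by
    rw [mul_sum, mul_sum, ← sum_add_distrib]
    exact sum_congr rfl fun j _ => by ring
  linarith [hs.le m hmC hm, hs'.le s hs.mem hs.pos]

lemma IsPropFair.exists_le [Nonempty J] {q s s' : J → ℝ} (hq : ∀ j, 0 < q j)
    (hs : IsPropFair C q s) (hs'C : s' ∈ C) (hs' : ∀ j, 0 < s' j) : ∃ j, s' j ≤ s j := by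
  by_contra! hlt
  have : ∑ j, q j * log (s j) < ∑ j, q j * log (s' j) :=
    sum_lt_sum_of_nonempty univ_nonempty fun j _ =>
      mul_lt_mul_of_pos_left (log_lt_log (hs.pos j) (hlt j)) (hq j)
  linarith [hs.le s' hs'C hs']

lemma IsPropFair.exp_le {M : ℝ} (hM : ∀ s ∈ C, ∀ j, s j ≤ M) {y : J → ℝ} (hyC : y ∈ C)
    (hy : ∀ j, 0 < y j) {q s : J → ℝ} (hq : ∀ j, 0 < q j) (hs : IsPropFair C q s) (i : J) :
    exp (log M - (∑ j, q j * log (M / y j)) / q i) ≤ s i := by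
  have hMpos : 0 < M := (hy i).trans_le (hM y hyC i)
  have hterm : ∀ j, 0 ≤ q j * log (M / s j) := fun j =>
    mul_nonneg (hq j).le (log_nonneg ((one_le_div (hs.pos j)).2 (hM s hs.mem j)))
  have hsum : ∑ j, q j * log (M / s j) ≤ ∑ j, q j * log (M / y j) := by
    have h := hs.le y hyC hy
    simp only [log_div hMpos.ne' (hs.pos _).ne', log_div hMpos.ne' (hy _).ne', mul_sub,
      sum_sub_distrib]
    linarith
  have hi : q i * log (M / s i) ≤ ∑ j, q j * log (M / y j) :=
    (single_le_sum (fun j _ => hterm j) (mem_univ i)).trans hsum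
  rw [← le_log_iff_exp_le (hs.pos i), sub_le_comm, ← log_div hMpos.ne' (hs.pos i).ne',
    le_div_iff₀ (hq i), mul_comm]
  exact hi

lemma IsPropFair.of_tendsto (hC : IsClosed C) {M : ℝ} (hM : ∀ s ∈ C, ∀ j, s j ≤ M)
    {y : J → ℝ} (hyC : y ∈ C) (hy : ∀ j, 0 < y j) {ι : Type*} {l : Filter ι} [l.NeBot]
    {p σ : ι → J → ℝ} {q a : J → ℝ} (hq : ∀ j, 0 < q j) (hp : Tendsto p l (𝓝 q))
    (hσ : Tendsto σ l (𝓝 a)) (hp_pos : ∀ᶠ i in l, ∀ j, 0 < p i j)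
    (hopt : ∀ᶠ i in l, IsPropFair C (p i) (σ i)) :
    IsPropFair C q a := by
  have hpj : ∀ j, Tendsto (fun i => p i j) l (𝓝 (q j)) := tendsto_pi_nhds.1 hp
  have hσj : ∀ j, Tendsto (fun i => σ i j) l (𝓝 (a j)) := tendsto_pi_nhds.1 hσ
  have ha : ∀ j, 0 < a j := by
    intro j
    have hlow : Tendsto (fun i => exp (log M - (∑ k, p i k * log (M / y k)) / p i j)) l
        (𝓝 (exp (log M - (∑ k, q k * log (M / y k)) / q j))) :=
      (tendsto_const_nhds.sub ((tendsto_finsetSum _ fun k _ => (hpj k).mul_const _).div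
        (hpj j) (hq j).ne')).rexp
    refine (exp_pos _).trans_le (le_of_tendsto_of_tendsto hlow (hσj j) ?_)
    exact (hp_pos.and hopt).mono fun i hi => hi.2.exp_le hM hyC hy hi.1 j
  refine ⟨hC.mem_of_tendsto hσ (hopt.mono fun i hi => hi.mem), ha, fun s' hs'C hs' => ?_⟩
  exact le_of_tendsto_of_tendsto (tendsto_finsetSum _ fun j _ => (hpj j).mul_const _)
    (tendsto_finsetSum _ fun j _ => (hpj j).mul ((hσj j).log (ha j).ne'))
    (hopt.mono fun i hi => hi.le s' hs'C hs')

lemma continuousOn_of_isPropFair (hCc : IsCompact C) (hCv : Convex ℝ C) {y : J → ℝ}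
    (hyC : y ∈ C) (hy : ∀ j, 0 < y j) {σ : (J → ℝ) → J → ℝ}
    (hσ : ∀ q, (∀ j, 0 < q j) → IsPropFair C q (σ q)) :
    ContinuousOn σ {q | ∀ j, 0 < q j} := by
  obtain ⟨M, hM⟩ := hCc.isBounded.exists_norm_le
  have hMj : ∀ s ∈ C, ∀ j, s j ≤ M := fun s hs j =>
    (le_norm_self _).trans ((norm_le_pi_norm s j).trans (hM s hs))
  intro q hq
  refine hCc.tendsto_nhds_of_unique_mapClusterPt
    (eventually_mem_nhdsWithin.mono fun p hp => (hσ p hp).mem) fun a _ ha => ?_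
  -- along `l`, the map `σ` tends to its cluster point `a`
  set l := comap σ (𝓝 a) ⊓ 𝓝[{q | ∀ j, 0 < q j}] q
  have : l.NeBot := neBot_inf_comap_iff_map'.2 ha
  have hpos : ∀ᶠ p in l, ∀ j, 0 < p j :=
    eventually_mem_nhdsWithin.filter_mono inf_le_right
  exact (IsPropFair.of_tendsto hCc.isClosed hMj hyC hy hq
    (tendsto_id'.2 (inf_le_right.trans nhdsWithin_le_nhds)) (tendsto_inf_left tendsto_comap)
    hpos (hpos.mono hσ)).eq hCv hq (hσ q hq)

/-- Envelope theorem: along a differentiable path of queue vectors, the optimal value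
`∑ j, q j * log (s j)` varies as if the proportionally fair allocation were frozen. -/
lemma hasDerivAt_sum_mul_log_of_isPropFair {q s : ℝ → J → ℝ} {q' : J → ℝ} {t : ℝ}
    (hq : ∀ j, HasDerivAt (fun τ => q τ j) (q' j) t) (hs : ContinuousAt s t)
    (hopt : ∀ᶠ τ in 𝓝 t, IsPropFair C (q τ) (s τ)) :
    HasDerivAt (fun τ => ∑ j, q τ j * log (s τ j)) (∑ j, q' j * log (s t j)) t := by
  have hst := hopt.self_of_nhds
  set E : ℝ → ℝ := fun τ => ∑ j, q τ j * (log (s τ j) - log (s t j))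
  set B : ℝ → ℝ := fun τ => ∑ j, (q τ j - q t j) * (log (s τ j) - log (s t j))
  -- `0 ≤ E τ` by optimality of `s τ` for `q τ`, and `E τ ≤ B τ` by that of `s t` for `q t`
  have hEB : ∀ᶠ τ in 𝓝 t, 0 ≤ E τ ∧ E τ ≤ B τ := hopt.mono fun τ hτ => by
    have h1 := hτ.le (s t) hst.mem hst.pos
    have h2 := hst.le (s τ) hτ.mem hτ.pos
    simp only [E, B, mul_sub, sub_mul, sum_sub_distrib] at h1 h2 ⊢
    constructor <;> linarith
  have hB : B =o[𝓝 t] fun τ => τ - t := by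
    refine IsLittleO.fun_sum fun j _ => ?_
    have hlog : (fun τ => log (s τ j) - log (s t j)) =o[𝓝 t] fun _ => (1 : ℝ) :=
      (isLittleO_one_iff ℝ).2 <| tendsto_sub_nhds_zero_iff.2 <|
        ((continuous_apply j).continuousAt.comp hs).log (hst.pos j).ne'
    simpa using (hq j).isBigO_sub.mul_isLittleO hlog
  have hE : HasDerivAt E 0 t := by
    have hEO : E =O[𝓝 t] B := IsBigO.of_bound 1 <| hEB.mono fun τ hτ => by
      simpa only [Real.norm_eq_abs, one_mul] using abs_le_abs_of_nonneg hτ.1 hτ.2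
    rw [hasDerivAt_iff_isLittleO]
    simpa [E] using hEO.trans_isLittleO hB
  have hlin : HasDerivAt (fun τ => ∑ j, q τ j * log (s t j)) (∑ j, q' j * log (s t j)) t :=
    HasDerivAt.fun_sum fun j _ => (hq j).mul_const _
  have h := hlin.fun_add hE
  rw [add_zero] at h
  refine h.congr_of_eventuallyEq (Eventually.of_forall fun τ => ?_)
  simp only [E, mul_sub, sum_sub_distrib]
  ring

end ProportionalFairness

lemma exists_pos_one_add_smul_mem {E : Type*} [AddCommGroup E] [Module ℝ E]
    [TopologicalSpace E] [ContinuousSMul ℝ E] {C : Set E} {a : E} (ha : a ∈ interior C) :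
    ∃ δ > (0 : ℝ), (1 + δ) • a ∈ C := by
  have hlim : Tendsto (fun δ : ℝ => (1 + δ) • a) (𝓝[>] 0) (𝓝 a) := by
    refine (Continuous.tendsto' ?_ 0 a (by simp)).mono_left nhdsWithin_le_nhds
    fun_prop
  obtain ⟨δ, hδC, hδ⟩ :=
    ((hlim.eventually (mem_interior_iff_mem_nhds.1 ha)).and self_mem_nhdsWithin).exists
  exact ⟨δ, hδ, hδC⟩

section Network

variable {J R : Type} [Fintype R] (K : R → ℕ) (link : R → ℕ → J)

/-- Positions `(r, k)` with `k < K r` stand for the pairs `(link r k, r) ∈ E`; this totals `y`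
over the positions at link `j`. -/
noncomputable def linkSum (y : R → ℕ → ℝ) (j : J) : ℝ :=
  ∑ r, ∑ k ∈ (range (K r)).filter (fun k => link r k = j), y r k

variable {K link}

lemma sum_linkSum_mul [Fintype J] (y : R → ℕ → ℝ) (c : J → ℝ) :
    ∑ j, linkSum K link y j * c j = ∑ r, ∑ k ∈ range (K r), y r k * c (link r k) := by
  have hfiber : ∀ j, linkSum K link y j * c j
      = ∑ r, ∑ k ∈ (range (K r)).filter (fun k => link r k = j), y r k * c (link r k) := by
    intro j
    simp only [linkSum, sum_mul]
    exact sum_congr rfl fun r _ => sum_congr rfl fun k hk => by rw [(mem_filter.1 hk).2]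
  simp only [hfiber]
  rw [sum_comm]
  exact sum_congr rfl fun r _ => sum_fiberwise_of_maps_to (fun k _ => mem_univ _) _

lemma sum_filter_eq_linkSum (hinj : ∀ r, ∀ k < K r, ∀ l < K r, link r k = link r l → k = l)
    (f : J → R → ℝ) (j : J) :
    ∑ r ∈ univ.filter (fun r => ∃ k < K r, link r k = j), f j r
      = linkSum K link (fun r k => f (link r k) r) j := by
  rw [linkSum, sum_filter]
  refine sum_congr rfl fun r _ => ?_
  split_ifs with h
  · obtain ⟨k, hk, hkj⟩ := h
    rw [sum_eq_single_of_mem k (mem_filter.2 ⟨mem_range.2 hk, hkj⟩), hkj]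
    intro l hl hlk
    obtain ⟨hl, hlj⟩ := mem_filter.1 hl
    exact absurd (hinj r l (mem_range.1 hl) k hk (hlj.trans hkj.symm)) hlk
  · refine (sum_eq_zero fun k hk => ?_).symm
    obtain ⟨hk, hlink⟩ := mem_filter.1 hk
    exact absurd ⟨k, mem_range.1 hk, hlink⟩ h

lemma sum_sum_filter_eq_sum_sum_range [Fintype J]
    (hinj : ∀ r, ∀ k < K r, ∀ l < K r, link r k = link r l → k = l) (f : J → R → ℝ) :
    ∑ j, ∑ r ∈ univ.filter (fun r => ∃ k < K r, link r k = j), f j r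
      = ∑ r, ∑ k ∈ range (K r), f (link r k) r := by
  simpa [sum_filter_eq_linkSum hinj] using sum_linkSum_mul (fun r k => f (link r k) r) 1

lemma qOf_eq_linkSum (hinj : ∀ r, ∀ k < K r, ∀ l < K r, link r k = link r l → k = l)
    (x : J → R → ℝ) (j : J) :
    qOf K link x j = linkSum K link (fun r k => x (link r k) r) j :=
  sum_filter_eq_linkSum hinj x j

lemma qOf_pos (hcover : ∀ j, ∃ r, ∃ k < K r, link r k = j) {x : J → R → ℝ}
    (hx : ∀ r, ∀ k < K r, 0 < x (link r k) r) (j : J) : 0 < qOf K link x j := by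
  obtain ⟨r, k, hk, hkj⟩ := hcover j
  refine sum_pos (fun r hr => ?_) ⟨r, mem_filter.2 ⟨mem_univ r, k, hk, hkj⟩⟩
  obtain ⟨-, k, hk, rfl⟩ := mem_filter.1 hr
  exact hx r k hk

lemma exists_le_of_linkSum_le {j : J} (hj : ∃ r, ∃ k < K r, link r k = j)
    {w u : R → ℕ → ℝ} (h : linkSum K link w j ≤ linkSum K link u j) :
    ∃ r, ∃ k < K r, link r k = j ∧ w r k ≤ u r k := by
  by_contra! hlt
  obtain ⟨r, k, hk, hkj⟩ := hj
  have hmem : k ∈ (range (K r)).filter (fun k => link r k = j) :=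
    mem_filter.2 ⟨mem_range.2 hk, hkj⟩
  have hlt' : ∀ r, ∀ k ∈ (range (K r)).filter (fun k => link r k = j), u r k < w r k :=
    fun r k hk => hlt r k (mem_range.1 (mem_filter.1 hk).1) (mem_filter.1 hk).2
  refine h.not_gt (sum_lt_sum (fun r _ => sum_le_sum fun k hk => (hlt' r k hk).le)
    ⟨r, mem_univ r, sum_lt_sum_of_nonempty ⟨k, hmem⟩ (hlt' r)⟩)

variable (K link) in
/-- The rate `x j r * σ*ⱼ(q) / qⱼ` at which the `k`-th link `j` of route `r` serves that route. -/
noncomputable def serviceRate [Fintype J] (sstar : (J → ℝ) → J → ℝ) (x : J → R → ℝ) (r : R)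
    (k : ℕ) : ℝ :=
  x (link r k) r * sstar (qOf K link x) (link r k) / qOf K link x (link r k)

lemma linkSum_serviceRate [Fintype J]
    (hinj : ∀ r, ∀ k < K r, ∀ l < K r, link r k = link r l → k = l)
    (sstar : (J → ℝ) → J → ℝ) {x : J → R → ℝ} {j : J} (hq : qOf K link x j ≠ 0) :
    linkSum K link (serviceRate K link sstar x) j = sstar (qOf K link x) j := by
  unfold serviceRate
  rw [← sum_filter_eq_linkSum hinj
    (fun j r => x j r * sstar (qOf K link x) j / qOf K link x j), ← sum_div, ← sum_mul]
  exact mul_div_cancel_left₀ _ hq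

lemma exists_pos_sum_routeDrift_le [Fintype J] [Nonempty J]
    (hinj : ∀ r, ∀ k < K r, ∀ l < K r, link r k = link r l → k = l)
    (hcover : ∀ j, ∃ r, ∃ k < K r, link r k = j) {abar : R → ℝ} (habar : ∀ r, 0 < abar r)
    {C : Set (J → ℝ)}
    (hint : (fun j => ∑ r ∈ univ.filter (fun r => ∃ k < K r, link r k = j), abar r)
      ∈ interior C)
    {sstar : (J → ℝ) → J → ℝ} (hopt : ∀ q, (∀ j, 0 < q j) → IsPropFair C q (sstar q)) :
    ∃ ε > (0 : ℝ), ∀ q : J → ℝ, (∀ j, 0 < q j) → ∀ u : R → ℕ → ℝ,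
      (∀ r, ∀ k < K r, 0 < u r k) → (∀ j, linkSum K link u j = sstar q j) →
        ∑ r, routeDrift (abar r) (K r) (u r) ≤ -ε := by
  set aJ : J → ℝ := qOf K link fun _ r => abar r
  have haJ_pos : ∀ j, 0 < aJ j := qOf_pos hcover fun r _ _ => habar r
  obtain ⟨δ, hδ, hδC⟩ := exists_pos_one_add_smul_mem hint
  set N : ℕ := univ.sup K
  set c : R → ℝ := fun r => √((1 + δ) * abar r) - √(abar r)
  have hc : ∀ r, 0 < c r := fun r =>
    sub_pos.2 (sqrt_lt_sqrt (habar r).le (lt_mul_of_one_lt_left (habar r) (by linarith)))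
  obtain ⟨r₀, -, hr₀⟩ := univ.exists_min_image (fun r => (c r / (N + 1)) ^ 2)
    (let ⟨r, _⟩ := hcover (Classical.arbitrary J); ⟨r, mem_univ r⟩)
  refine ⟨(c r₀ / (N + 1)) ^ 2, by have := hc r₀; positivity, fun q hq u hu hsum => ?_⟩
  obtain ⟨j, hj⟩ := (hopt q hq).exists_le hq hδC fun j => by
    have := haJ_pos j; simp only [Pi.smul_apply, smul_eq_mul]; positivity
  have hlink : linkSum K link (fun r _ => (1 + δ) * abar r) j ≤ linkSum K link u j := by
    rw [hsum j, ← sum_filter_eq_linkSum hinj (fun _ r => (1 + δ) * abar r), ← mul_sum]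
    exact hj
  obtain ⟨r, k, hk, -, hrk⟩ := exists_le_of_linkSum_le (hcover j) hlink
  have hr : routeDrift (abar r) (K r) (u r) ≤ -(c r / (N + 1)) ^ 2 :=
    routeDrift_le_neg_sq (habar r) (hu r) hk (le_mul_of_one_le_left (habar r).le (by linarith))
      hrk (by exact_mod_cast (Finset.le_sup (f := K) (mem_univ r)).trans N.le_succ)
  have hsingle : -routeDrift (abar r) (K r) (u r) ≤ -∑ r, routeDrift (abar r) (K r) (u r) := by
    rw [← sum_neg_distrib]
    exact single_le_sum (f := fun r => -routeDrift (abar r) (K r) (u r))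
      (fun r _ => neg_nonneg.2 (routeDrift_nonpos (habar r) (hu r))) (mem_univ r)
  linarith [hr₀ r (mem_univ r)]

lemma Hfun_eq [Fintype J] (hinj : ∀ r, ∀ k < K r, ∀ l < K r, link r k = link r l → k = l)
    {abar : R → ℝ} (habar : ∀ r, 0 < abar r) {sstar : (J → ℝ) → J → ℝ} {x : J → R → ℝ}
    (hx : ∀ r, ∀ k < K r, 0 < x (link r k) r) (hq : ∀ j, 0 < qOf K link x j)
    (hσ : ∀ j, 0 < sstar (qOf K link x) j) :
    Hfun K link abar sstar x
      = ∑ r, ∑ k ∈ range (K r), x (link r k) r * log (x (link r k) r)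
        + ∑ j, qOf K link x j * log (sstar (qOf K link x) j)
        - ∑ j, qOf K link x j * log (qOf K link x j)
        - ∑ r, ∑ k ∈ range (K r), x (link r k) r * log (abar r) := by
  have hsplit : ∀ j, ∀ r ∈ univ.filter (fun r => ∃ k < K r, link r k = j),
      x j r * log (x j r * sstar (qOf K link x) j / (qOf K link x j * abar r))
        = x j r * log (x j r) + x j r * log (sstar (qOf K link x) j)
          - x j r * log (qOf K link x j) - x j r * log (abar r) := by
    intro j r hr
    obtain ⟨-, k, hk, rfl⟩ := mem_filter.1 hr
    rw [log_div (mul_pos (hx r k hk) (hσ _)).ne' (mul_pos (hq _) (habar r)).ne',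
      log_mul (hx r k hk).ne' (hσ _).ne', log_mul (hq _).ne' (habar r).ne']
    ring
  rw [Hfun, sum_congr rfl fun j _ => sum_congr rfl (hsplit j)]
  simp only [sum_add_distrib, sum_sub_distrib]
  rw [sum_sum_filter_eq_sum_sum_range hinj fun j r => x j r * log (x j r),
    sum_sum_filter_eq_sum_sum_range hinj fun j r => x j r * log (abar r)]
  simp only [qOf, sum_mul]

lemma hasDerivAt_qOf (hinj : ∀ r, ∀ k < K r, ∀ l < K r, link r k = link r l → k = l)
    {x : ℝ → J → R → ℝ} {t : ℝ} {D : R → ℕ → ℝ}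
    (hD : ∀ r, ∀ k < K r, HasDerivAt (fun τ => x τ (link r k) r) (D r k) t) (j : J) :
    HasDerivAt (fun τ => qOf K link (x τ) j) (linkSum K link D j) t := by
  simp only [qOf_eq_linkSum hinj, linkSum]
  exact HasDerivAt.fun_sum fun r _ => HasDerivAt.fun_sum fun k hk =>
    hD r k (mem_range.1 (mem_filter.1 hk).1)

lemma eventually_pos_of_hasDerivAt {x : ℝ → J → R → ℝ} {t : ℝ} {D : R → ℕ → ℝ}
    (hx : ∀ r, ∀ k < K r, 0 < x t (link r k) r)
    (hD : ∀ r, ∀ k < K r, HasDerivAt (fun τ => x τ (link r k) r) (D r k) t) :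
    ∀ᶠ τ in 𝓝 t, ∀ r, ∀ k < K r, 0 < x τ (link r k) r := by
  refine eventually_all.2 fun r => ?_
  have h := (eventually_all_finset (range (K r))).2 fun k hk =>
    (hD r k (mem_range.1 hk)).continuousAt.eventually (lt_mem_nhds (hx r k (mem_range.1 hk)))
  exact h.mono fun τ h k hk => h k (mem_range.2 hk)

lemma hasDerivAt_Hfun [Fintype J]
    (hinj : ∀ r, ∀ k < K r, ∀ l < K r, link r k = link r l → k = l)
    (hcover : ∀ j, ∃ r, ∃ k < K r, link r k = j) {abar : R → ℝ} (habar : ∀ r, 0 < abar r)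
    {C : Set (J → ℝ)} {sstar : (J → ℝ) → J → ℝ}
    (hopt : ∀ q, (∀ j, 0 < q j) → IsPropFair C q (sstar q))
    (hcont : ContinuousOn sstar {q | ∀ j, 0 < q j}) {x : ℝ → J → R → ℝ} {t : ℝ}
    {D : R → ℕ → ℝ} (hx : ∀ r, ∀ k < K r, 0 < x t (link r k) r)
    (hD : ∀ r, ∀ k < K r, HasDerivAt (fun τ => x τ (link r k) r) (D r k) t) :
    HasDerivAt (fun τ => Hfun K link abar sstar (x τ))
      (∑ r, ∑ k ∈ range (K r), D r k * log (serviceRate K link sstar (x t) r k / abar r)) t := by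
  set q : ℝ → J → ℝ := fun τ => qOf K link (x τ)
  have hxev := eventually_pos_of_hasDerivAt hx hD
  have hqev : ∀ᶠ τ in 𝓝 t, ∀ j, 0 < q τ j := hxev.mono fun τ h => qOf_pos hcover h
  have hq : ∀ j, 0 < q t j := hqev.self_of_nhds
  have hσ : ∀ j, 0 < sstar (q t) j := (hopt _ hq).pos
  have hqD : ∀ j, HasDerivAt (fun τ => q τ j) (linkSum K link D j) t :=
    hasDerivAt_qOf hinj hD
  have hopen : IsOpen {q : J → ℝ | ∀ j, 0 < q j} := by
    simpa only [Set.ofPred_forall] using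
      isOpen_iInter_of_finite fun j => isOpen_lt continuous_const (continuous_apply j)
  have hs : ContinuousAt (fun τ => sstar (q τ)) t :=
    (hcont.continuousAt (hopen.mem_nhds hq)).comp
      (continuousAt_pi.2 fun j => (hqD j).continuousAt)
  have hxlogx :
      HasDerivAt (fun τ => ∑ r, ∑ k ∈ range (K r), x τ (link r k) r * log (x τ (link r k) r))
      (∑ r, ∑ k ∈ range (K r), (log (x t (link r k) r) + 1) * D r k) t :=
    HasDerivAt.fun_sum fun r _ => HasDerivAt.fun_sum fun k hk =>
      (hasDerivAt_mul_log (hx r k (mem_range.1 hk)).ne').comp (h₂ := fun y => y * log y) t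
        (hD r k (mem_range.1 hk))
  have henv := hasDerivAt_sum_mul_log_of_isPropFair hqD hs (hqev.mono fun τ h => hopt _ h)
  have hqlogq : HasDerivAt (fun τ => ∑ j, q τ j * log (q τ j))
      (∑ j, (log (q t j) + 1) * linkSum K link D j) t :=
    HasDerivAt.fun_sum fun j _ =>
      (hasDerivAt_mul_log (hq j).ne').comp (h₂ := fun y => y * log y) t (hqD j)
  have hxloga : HasDerivAt (fun τ => ∑ r, ∑ k ∈ range (K r), x τ (link r k) r * log (abar r))
      (∑ r, ∑ k ∈ range (K r), D r k * log (abar r)) t :=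
    HasDerivAt.fun_sum fun r _ => HasDerivAt.fun_sum fun k hk =>
      (hD r k (mem_range.1 hk)).mul_const _
  have hH := ((hxlogx.fun_add henv).fun_sub hqlogq).fun_sub hxloga
  simp only [mul_comm (log (q t _) + 1), sum_linkSum_mul] at hH
  refine (hH.congr_of_eventuallyEq (hxev.mono fun τ h =>
    Hfun_eq hinj habar h (qOf_pos hcover h) (hopt _ (qOf_pos hcover h)).pos)).congr_deriv ?_
  simp only [← sum_add_distrib, ← sum_sub_distrib]
  refine sum_congr rfl fun r _ => sum_congr rfl fun k hk => ?_
  have hxk := hx r k (mem_range.1 hk)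
  rw [serviceRate, log_div (div_pos (mul_pos hxk (hσ _)) (hq _)).ne' (habar r).ne',
    log_div (mul_pos hxk (hσ _)).ne' (hq _).ne', log_mul hxk.ne' (hσ _).ne']
  ring

end Network

theorem H_strictly_negative_drift_general {J R : Type} [Fintype J] [Fintype R]
    [Nonempty J]
    (K : R → ℕ)
    (link : R → ℕ → J)
    (hlink_inj : ∀ r, ∀ k < K r, ∀ l < K r, link r k = link r l → k = l)
    (hcover : ∀ j, ∃ r, ∃ k < K r, link r k = j)
    (abar : R → ℝ) (habar_pos : ∀ r, 0 < abar r)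
    (C : Set (J → ℝ)) (hC_compact : IsCompact C) (hC_convex : Convex ℝ C)
    (habarJ_int :
      (fun j => ∑ r ∈ Finset.univ.filter (fun r => ∃ k < K r, link r k = j), abar r)
        ∈ interior C)
    (sstar : (J → ℝ) → J → ℝ)
    (hsstar : ∀ q : J → ℝ, (∀ j, 0 ≤ q j) → q ≠ 0 →
      sstar q ∈ C ∧ (∀ j, 0 < q j → 0 < sstar q j) ∧
      ∀ s ∈ C, (∀ j, 0 < q j → 0 < s j) →
        ∑ j ∈ Finset.univ.filter (fun j => 0 < q j), q j * Real.log (s j)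
          ≤ ∑ j ∈ Finset.univ.filter (fun j => 0 < q j), q j * Real.log (sstar q j)) :
    ∃ ε > (0 : ℝ), ∀ x d : ℝ → J → R → ℝ,
      (∀ j r, ∀ t ≥ (0 : ℝ), IntervalIntegrable (fun τ => d τ j r) volume 0 t) →
      (∀ j r, ∀ t ≥ (0 : ℝ), x t j r = x 0 j r + ∫ τ in (0 : ℝ)..t, d τ j r) →
      (∀ t ≥ (0 : ℝ), ∀ r, ∀ k < K r, 0 ≤ x t (link r k) r) →
      (∀ᵐ t : ℝ, 0 ≤ t → (∀ r, ∀ k < K r, 0 < x t (link r k) r) →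
        ∀ r, ∀ k < K r,
          HasDerivAt (fun τ => x τ (link r k) r)
            ((if k = 0 then abar r else
                x t (link r (k - 1)) r * sstar (qOf K link (x t)) (link r (k - 1)) /
                  qOf K link (x t) (link r (k - 1)))
              - x t (link r k) r * sstar (qOf K link (x t)) (link r k) /
                  qOf K link (x t) (link r k)) t) →
      ∀ᵐ t : ℝ, 0 ≤ t → (∀ r, ∀ k < K r, 0 < x t (link r k) r) →
        ∃ dH ≤ -ε, HasDerivAt (fun τ => Hfun K link abar sstar (x τ)) dH t := by
  have hopt : ∀ q : J → ℝ, (∀ j, 0 < q j) → IsPropFair C q (sstar q) := fun q hq => by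
    obtain ⟨hqC, hpos, hmax⟩ := hsstar q (fun j => (hq j).le)
      fun h => (hq (Classical.arbitrary J)).ne' (congrFun h _)
    simp only [filter_true_of_mem fun j _ => hq j] at hmax
    exact ⟨hqC, fun j => hpos j (hq j), fun s hs hs' => hmax s hs fun j _ => hs' j⟩
  have hcont : ContinuousOn sstar {q | ∀ j, 0 < q j} :=
    continuousOn_of_isPropFair hC_compact hC_convex (interior_subset habarJ_int)
      (qOf_pos (x := fun _ r => abar r) hcover fun r _ _ => habar_pos r) hopt
  obtain ⟨ε, hε, hdrift⟩ :=
    exists_pos_sum_routeDrift_le hlink_inj hcover habar_pos habarJ_int hopt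
  refine ⟨ε, hε, fun x d _ _ _ hflow => ?_⟩
  filter_upwards [hflow] with t hflow_t ht hx
  have hq := qOf_pos hcover hx
  have hu : ∀ r, ∀ k < K r, 0 < serviceRate K link sstar (x t) r k := fun r k hk =>
    div_pos (mul_pos (hx r k hk) ((hopt _ hq).pos _)) (hq _)
  exact ⟨_, hdrift _ hq _ hu fun j => linkSum_serviceRate hlink_inj sstar (hq j).ne',
    hasDerivAt_Hfun hlink_inj hcover habar_pos hopt hcont hx (hflow_t ht hx)⟩

/-- Strictly negative drift of the entropy Lyapunov function along fluid
trajectories of the Proportional Scheduler: there is an `ε > 0`, depending only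
on the network data, such that along any fluid trajectory, at almost every time
at which the state is strictly positive, `t ↦ H(x(t))` is differentiable with
derivative at most `-ε`. Local absolute continuity of `x` is expressed by
writing `x` as the integral of a locally (interval-)integrable function `d`. -/
theorem H_strictly_negative_drift {J R : Type} [Fintype J] [Fintype R]
    [Nonempty J] [Nonempty R]
    (K : R → ℕ) (hK : ∀ r, 1 ≤ K r)
    (link : R → ℕ → J)
    (hlink_inj : ∀ r, ∀ k < K r, ∀ l < K r, link r k = link r l → k = l)
    (hcover : ∀ j, ∃ r, ∃ k < K r, link r k = j)
    (abar : R → ℝ) (habar_pos : ∀ r, 0 < abar r)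
    (C : Set (J → ℝ)) (hC_compact : IsCompact C) (hC_convex : Convex ℝ C)
    (hC_int : (interior C).Nonempty) (hC_nonneg : ∀ s ∈ C, ∀ j, 0 ≤ s j)
    (habarJ_int :
      (fun j => ∑ r ∈ Finset.univ.filter (fun r => ∃ k < K r, link r k = j), abar r)
        ∈ interior C)
    (sstar : (J → ℝ) → J → ℝ)
    (hsstar : ∀ q : J → ℝ, (∀ j, 0 ≤ q j) → q ≠ 0 →
      sstar q ∈ C ∧ (∀ j, 0 < q j → 0 < sstar q j) ∧
      ∀ s ∈ C, (∀ j, 0 < q j → 0 < s j) →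
        ∑ j ∈ Finset.univ.filter (fun j => 0 < q j), q j * Real.log (s j)
          ≤ ∑ j ∈ Finset.univ.filter (fun j => 0 < q j), q j * Real.log (sstar q j)) :
    ∃ ε > (0 : ℝ), ∀ x d : ℝ → J → R → ℝ,
      (∀ j r, ∀ t ≥ (0 : ℝ), IntervalIntegrable (fun τ => d τ j r) volume 0 t) →
      (∀ j r, ∀ t ≥ (0 : ℝ), x t j r = x 0 j r + ∫ τ in (0 : ℝ)..t, d τ j r) →
      (∀ t ≥ (0 : ℝ), ∀ r, ∀ k < K r, 0 ≤ x t (link r k) r) →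
      (∀ᵐ t : ℝ, 0 ≤ t → (∀ r, ∀ k < K r, 0 < x t (link r k) r) →
        ∀ r, ∀ k < K r,
          HasDerivAt (fun τ => x τ (link r k) r)
            ((if k = 0 then abar r else
                x t (link r (k - 1)) r * sstar (qOf K link (x t)) (link r (k - 1)) /
                  qOf K link (x t) (link r (k - 1)))
              - x t (link r k) r * sstar (qOf K link (x t)) (link r k) /
                  qOf K link (x t) (link r k)) t) →
      ∀ᵐ t : ℝ, 0 ≤ t → (∀ r, ∀ k < K r, 0 < x t (link r k) r) →
        ∃ dH ≤ -ε, HasDerivAt (fun τ => Hfun K link abar sstar (x τ)) dH t :=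
  H_strictly_negative_drift_general K link hlink_inj hcover abar habar_pos C hC_compact hC_convex
    habarJ_int sstar hsstar
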